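/- arXiv:2004.01229 — 5 statements merged into one kernel-verified Lean document; each statement's English description precedes it below -/
import Mathlib

section
/- If G is a connected chordal non-bipartite graph such that B_G = { v : G - v bipartite } has exactly three elements v_0, v_1, v_2, then {v_0, v_1, v_2} induces the unique triangle of G. -/
open SimpleGraph

/-- A graph is chordal iff it has no induced cycle of length at least 4. -/
def IsChordal {V : Type*} (G : SimpleGraph V) : Prop :=
  ∀ n : ℕ, 4 ≤ n → IsEmpty (cycleGraph n ↪g G)

/-- `H` occurs as a (not necessarily induced) subgraph of `G`. -/
def ContainsSub {W V : Type*} (H : SimpleGraph W) (G : SimpleGraph V) : Prop :=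
  ∃ f : H →g G, Function.Injective f

/-- `H` occurs as an induced subgraph of `G`. -/
def ContainsInd {W V : Type*} (H : SimpleGraph W) (G : SimpleGraph V) : Prop :=
  Nonempty (H ↪g G)

def IsBipartite {V : Type*} (G : SimpleGraph V) : Prop := G.Colorable 2

/-- The bowtie graph `F₅`: two triangles {0,1,2} and {2,3,4} sharing vertex 2. -/
def bowtie : SimpleGraph (Fin 5) :=
  fromRel (fun a b => (a, b) ∈ [((0:Fin 5),(1:Fin 5)),(0,2),(1,2),(2,3),(2,4),(3,4)])

/-- `F₆`: two vertex-disjoint triangles {0,1,2} and {3,4,5} joined by the edge 1-4. -/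
def F6 : SimpleGraph (Fin 6) :=
  fromRel (fun a b => (a, b) ∈ [((0:Fin 6),(1:Fin 6)),(0,2),(1,2),(3,4),(3,5),(4,5),(1,4)])

/-- `2K₃`: two vertex-disjoint triangles with no edges between them. -/
def twoK3 : SimpleGraph (Fin 6) :=
  fromRel (fun a b => (a, b) ∈ [((0:Fin 6),(1:Fin 6)),(0,2),(1,2),(3,4),(3,5),(4,5)])

/-- `F₀₁`: two disjoint triangles joined by two edges sharing an endpoint. -/
def F01 : SimpleGraph (Fin 6) :=
  fromRel (fun a b => (a, b) ∈ [((0:Fin 6),(1:Fin 6)),(0,2),(1,2),(3,4),(3,5),(4,5),(0,3),(0,4)])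

/-- `F₀₂`: two disjoint triangles joined by two edges with four distinct endpoints. -/
def F02 : SimpleGraph (Fin 6) :=
  fromRel (fun a b => (a, b) ∈ [((0:Fin 6),(1:Fin 6)),(0,2),(1,2),(3,4),(3,5),(4,5),(0,3),(1,4)])

/-- `F₁ = K₃ + K₂`: disjoint union of a triangle and an edge. -/
def F1 : SimpleGraph (Fin 5) :=
  fromRel (fun a b => (a, b) ∈ [((0:Fin 5),(1:Fin 5)),(0,2),(1,2),(3,4)])

/-- An `M₁`-partition: three independent sets with the second completely adjacent
to the third. -/
def IsM1Partition {V : Type*} (G : SimpleGraph V) (V1 V2 V3 : Set V) : Prop :=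
  (∀ v, v ∈ V1 ∨ v ∈ V2 ∨ v ∈ V3) ∧
  Disjoint V1 V2 ∧ Disjoint V1 V3 ∧ Disjoint V2 V3 ∧
  (∀ a ∈ V1, ∀ b ∈ V1, ¬ G.Adj a b) ∧
  (∀ a ∈ V2, ∀ b ∈ V2, ¬ G.Adj a b) ∧
  (∀ a ∈ V3, ∀ b ∈ V3, ¬ G.Adj a b) ∧
  (∀ a ∈ V2, ∀ b ∈ V3, G.Adj a b)

def HasM1Partition {V : Type*} (G : SimpleGraph V) : Prop :=
  ∃ V1 V2 V3 : Set V, IsM1Partition G V1 V2 V3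

/-- `W n`: a path `p₀ p₁ … p_{2n+3}` (vertices `0,…,2n+3`) together with an extra
vertex `2n+4` adjacent to `p₁,…,p_{2n+2}`. -/
def Wgraph (n : ℕ) : SimpleGraph (Fin (2*n+5)) :=
  fromRel (fun i j =>
    (i.val + 1 = j.val ∧ j.val ≤ 2*n+3) ∨
    (j.val = 2*n+4 ∧ 1 ≤ i.val ∧ i.val ≤ 2*n+2))

lemma aux_fin_sub_val_eq_one {n : ℕ} (h2 : 2 ≤ n) (a b : Fin n) :
    (b - a).val = 1 ↔ (b.val = a.val + 1 ∨ (a.val = n - 1 ∧ b.val = 0)) := by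
  rw [Fin.sub_def]
  simp only
  have ha := a.isLt; have hb := b.isLt
  rcases Nat.lt_or_ge ((n - a.val) + b.val) n with h | h
  · rw [Nat.mod_eq_of_lt h]; omega
  · rw [Nat.mod_eq_sub_mod h, Nat.mod_eq_of_lt (by omega)]; omega

lemma aux_odd_closed_walk {V : Type*} (G : SimpleGraph V) (hconn : G.Connected)
    (hnb : ¬ _root_.IsBipartite G) : ∃ (u : V) (p : G.Walk u u), Odd p.length := by
  classical
  by_contra h
  push_neg at h
  apply hnb
  obtain ⟨r⟩ := hconn.nonempty
  refine ⟨Coloring.mk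
    (fun v => if Odd ((hconn.preconnected r v).some.length) then (0 : Fin 2) else 1) ?_⟩
  intro u v hadj
  have key := h r ((hconn.preconnected r u).some.append
    (SimpleGraph.Walk.cons hadj (hconn.preconnected r v).some.reverse))
  rw [Nat.odd_iff] at key
  rw [SimpleGraph.Walk.length_append, SimpleGraph.Walk.length_cons,
    SimpleGraph.Walk.length_reverse] at key
  simp only [Nat.odd_iff]
  split_ifs with h1 h2 h2
  · exfalso; omega
  · decide
  · decide
  · exfalso; omega

lemma aux_exists_triangle {V : Type*} (G : SimpleGraph V) (hconn : G.Connected)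
    (hch : IsChordal G) (hnb : ¬ _root_.IsBipartite G) :
    ∃ a b c : V, G.Adj a b ∧ G.Adj b c ∧ G.Adj a c := by
  classical
  obtain ⟨u, p, hodd⟩ := aux_odd_closed_walk G hconn hnb
  have hex : ∃ n, Odd n ∧ ∃ f : ℕ → V, f n = f 0 ∧ ∀ i < n, G.Adj (f i) (f (i + 1)) :=
    ⟨p.length, hodd, p.getVert, by rw [p.getVert_length, p.getVert_zero],
      fun i hi => p.adj_getVert_succ hi⟩
  obtain ⟨hoddn, f, hf, hadj⟩ := Nat.find_spec hex
  set n := Nat.find hex with hn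
  have shorter : ∀ m, m < n → Odd m → ∀ g : ℕ → V, g m = g 0 →
      (∀ i < m, G.Adj (g i) (g (i + 1))) → False :=
    fun m hm h1 g h2 h3 => Nat.find_min hex hm ⟨h1, g, h2, h3⟩
  have h1 : n ≠ 1 := by
    intro h
    have h2 := hadj 0 (by omega)
    rw [show (0:ℕ) + 1 = n from by omega, hf] at h2
    exact G.loopless.irrefl _ h2
  have h3 : 3 ≤ n := by
    have := hoddn; rw [Nat.odd_iff] at this; omega
  rcases eq_or_lt_of_le h3 with h3' | h5
  · refine ⟨f 0, f 1, f 2, hadj 0 (by omega), hadj 1 (by omega), ?_⟩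
    have h2 := hadj 2 (by omega)
    rw [show (2:ℕ) + 1 = n from by omega, hf] at h2
    exact h2.symm
  exfalso
  have h5 : 5 ≤ n := by have := hoddn; rw [Nat.odd_iff] at this; omega
  -- injectivity
  have hinj : ∀ i j : ℕ, i < j → j ≤ n → (i ≠ 0 ∨ j ≠ n) → f i ≠ f j := by
    intro i j hij hjn hne heq
    have hpar : Odd (j - i) ∨ Odd (n - j + i) := by
      have := hoddn; rw [Nat.odd_iff] at this
      rw [Nat.odd_iff, Nat.odd_iff]; omega
    rcases hpar with hpp | hpp
    · refine shorter (j - i) (by omega) hpp (fun k => f (i + k)) ?_ (fun k hk => ?_)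
      · rw [show i + (j - i) = j from by omega, Nat.add_zero]
        exact heq.symm
      · rw [show i + (k + 1) = (i + k) + 1 from by omega]
        exact hadj (i + k) (by omega)
    · refine shorter (n - j + i) (by omega) hpp
        (fun k => if k ≤ n - j then f (j + k) else f (k - (n - j))) ?_ (fun k hk => ?_)
      · rw [if_pos (Nat.zero_le _), Nat.add_zero]
        by_cases hc : n - j + i ≤ n - j
        · have hi0 : i = 0 := by omega
          rw [if_pos hc, show j + (n - j + i) = n from by omega, hf, ← hi0]
          exact heq
        · rw [if_neg hc, show n - j + i - (n - j) = i from by omega]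
          exact heq
      · rcases Nat.lt_trichotomy (k + 1) (n - j + 1) with hk1 | hk1 | hk1
        · rw [if_pos (by omega : k ≤ n - j), if_pos (by omega : k + 1 ≤ n - j),
            show j + (k + 1) = (j + k) + 1 from by omega]
          exact hadj (j + k) (by omega)
        · rw [if_pos (by omega : k ≤ n - j), if_neg (by omega : ¬ k + 1 ≤ n - j),
            show k = n - j from by omega, show j + (n - j) = n from by omega, hf,
            show n - j + 1 - (n - j) = 0 + 1 from by omega]
          exact hadj 0 (by omega)
        · rw [if_neg (by omega : ¬ k ≤ n - j), if_neg (by omega : ¬ k + 1 ≤ n - j),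
            show k + 1 - (n - j) = (k - (n - j)) + 1 from by omega]
          exact hadj (k - (n - j)) (by omega)
  -- chordlessness
  have hchord : ∀ i j : ℕ, i < j → j < n → i + 1 < j → ¬(i = 0 ∧ j = n - 1) →
      ¬ G.Adj (f i) (f j) := by
    intro i j hij hjn hij1 hne hA
    have hpar : Odd (j - i + 1) ∨ Odd (n - j + i + 1) := by
      have := hoddn; rw [Nat.odd_iff] at this
      rw [Nat.odd_iff, Nat.odd_iff]; omega
    rcases hpar with hpp | hpp
    · refine shorter (j - i + 1) (by omega) hpp
        (fun k => if k ≤ j - i then f (i + k) else f i) ?_ (fun k hk => ?_)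
      · rw [if_neg (by omega : ¬ j - i + 1 ≤ j - i), if_pos (Nat.zero_le _), Nat.add_zero]
      · rcases Nat.lt_trichotomy k (j - i) with hk1 | hk1 | hk1
        · rw [if_pos (by omega : k ≤ j - i), if_pos (by omega : k + 1 ≤ j - i),
            show i + (k + 1) = (i + k) + 1 from by omega]
          exact hadj (i + k) (by omega)
        · rw [if_pos (by omega : k ≤ j - i), if_neg (by omega : ¬ k + 1 ≤ j - i),
            hk1, show i + (j - i) = j from by omega]
          exact hA.symm
        · omega
    · refine shorter (n - j + i + 1) (by omega) hpp
        (fun k => if k ≤ n - j then f (j + k) else if k ≤ n - j + i then f (k - (n - j))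
          else f j) ?_ (fun k hk => ?_)
      · rw [if_neg (by omega : ¬ n - j + i + 1 ≤ n - j),
          if_neg (by omega : ¬ n - j + i + 1 ≤ n - j + i),
          if_pos (Nat.zero_le _), Nat.add_zero]
      · rcases Nat.lt_trichotomy (k + 1) (n - j + 1) with hk1 | hk1 | hk1
        · rw [if_pos (by omega : k ≤ n - j), if_pos (by omega : k + 1 ≤ n - j),
            show j + (k + 1) = (j + k) + 1 from by omega]
          exact hadj (j + k) (by omega)
        · rw [if_pos (by omega : k ≤ n - j), show k = n - j from by omega,
            show j + (n - j) = n from by omega, hf,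
            if_neg (by omega : ¬ n - j + 1 ≤ n - j)]
          rcases Nat.eq_zero_or_pos i with hi0 | hi0
          · rw [if_neg (by omega : ¬ n - j + 1 ≤ n - j + i), ← hi0]
            exact hA
          · rw [if_pos (by omega : n - j + 1 ≤ n - j + i),
              show n - j + 1 - (n - j) = 0 + 1 from by omega]
            exact hadj 0 (by omega)
        · rcases Nat.lt_or_ge k (n - j + i) with hk2 | hk2
          · rw [if_neg (by omega : ¬ k ≤ n - j), if_pos (by omega : k ≤ n - j + i),
              if_neg (by omega : ¬ k + 1 ≤ n - j), if_pos (by omega : k + 1 ≤ n - j + i),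
              show k + 1 - (n - j) = (k - (n - j)) + 1 from by omega]
            exact hadj (k - (n - j)) (by omega)
          · rw [if_neg (by omega : ¬ k ≤ n - j), if_pos (by omega : k ≤ n - j + i),
              if_neg (by omega : ¬ k + 1 ≤ n - j), if_neg (by omega : ¬ k + 1 ≤ n - j + i),
              show k - (n - j) = i from by omega]
            exact hA
  -- build an induced cycle embedding, contradicting chordality
  have h2n : 2 ≤ n := by omega
  have hcyc := hch n (by omega)
  refine hcyc.false (⟨⟨fun k : Fin n => f k.val, ?_⟩, ?_⟩ : cycleGraph n ↪g G)
  · intro a b hab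
    simp only at hab
    by_contra hne
    have hva := a.isLt; have hvb := b.isLt
    rcases Nat.lt_trichotomy a.val b.val with hlt | heqv | hlt
    · exact hinj a.val b.val hlt (by omega) (Or.inr (by omega)) hab
    · exact hne (Fin.ext heqv)
    · exact hinj b.val a.val hlt (by omega) (Or.inr (by omega)) hab.symm
  · intro a b
    rw [cycleGraph_adj', aux_fin_sub_val_eq_one h2n b a, aux_fin_sub_val_eq_one h2n a b]
    have hva := a.isLt; have hvb := b.isLt
    constructor
    · intro hA
      rcases Nat.lt_trichotomy a.val b.val with hlt | heqv | hlt
      · by_cases hs : b.val = a.val + 1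
        · exact Or.inr (Or.inl hs)
        · by_cases hs2 : a.val = 0 ∧ b.val = n - 1
          · exact Or.inl (Or.inr ⟨hs2.2, hs2.1⟩)
          · exact absurd hA (hchord a.val b.val hlt hvb (by omega) hs2)
      · change G.Adj (f a.val) (f b.val) at hA; rw [heqv] at hA; exact (G.loopless.irrefl _ hA).elim
      · by_cases hs : a.val = b.val + 1
        · exact Or.inl (Or.inl hs)
        · by_cases hs2 : b.val = 0 ∧ a.val = n - 1
          · exact Or.inr (Or.inr ⟨hs2.2, hs2.1⟩)
          · exact absurd hA.symm (hchord b.val a.val hlt hva (by omega) hs2)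
    · rintro ((hs | ⟨hs1, hs2⟩) | (hs | ⟨hs1, hs2⟩))
      · have h := hadj b.val (by omega)
        rw [← hs] at h
        exact h.symm
      · have h := hadj b.val (by omega)
        rw [show b.val + 1 = n from by omega, hf, ← hs2] at h
        exact h.symm
      · have h := hadj a.val (by omega)
        rw [← hs] at h
        exact h
      · have h := hadj a.val (by omega)
        rw [show a.val + 1 = n from by omega, hf, ← hs2] at h
        exact h
lemma aux_no_tri {V : Type*} {G : SimpleGraph V} {s : Set V} (h : _root_.IsBipartite (G.induce s))
    {x y z : V} (hx : x ∈ s) (hy : y ∈ s) (hz : z ∈ s)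
    (h1 : G.Adj x y) (h2 : G.Adj y z) (h3 : G.Adj x z) : False := by
  obtain ⟨col⟩ := (h : (G.induce s).Colorable 2)
  have e1 : col ⟨x, hx⟩ ≠ col ⟨y, hy⟩ :=
    col.valid (by simp only [comap_adj, Function.Embedding.coe_subtype]; exact h1)
  have e2 : col ⟨y, hy⟩ ≠ col ⟨z, hz⟩ :=
    col.valid (by simp only [comap_adj, Function.Embedding.coe_subtype]; exact h2)
  have e3 : col ⟨x, hx⟩ ≠ col ⟨z, hz⟩ :=
    col.valid (by simp only [comap_adj, Function.Embedding.coe_subtype]; exact h3)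
  have v1 := (col ⟨x, hx⟩).isLt
  have v2 := (col ⟨y, hy⟩).isLt
  have v3 := (col ⟨z, hz⟩).isLt
  rw [Ne, Fin.ext_iff] at e1 e2 e3
  omega


/-- if a connected chordal non-bipartite graph has exactly three
bipartizing vertices `v0, v1, v2`, they induce the unique triangle of `G`. -/
theorem stmt10 {V : Type*} [Fintype V] [DecidableEq V] (G : SimpleGraph V)
    (hconn : G.Connected) (hch : IsChordal G) (hnb : ¬ _root_.IsBipartite G)
    (v0 v1 v2 : V) (h01 : v0 ≠ v1) (h02 : v0 ≠ v2) (h12 : v1 ≠ v2)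
    (hB : {v : V | _root_.IsBipartite (G.induce {u | u ≠ v})} = {v0, v1, v2}) :
    G.IsNClique 3 {v0, v1, v2} ∧
      ∀ t : Finset V, G.IsNClique 3 t → t = {v0, v1, v2} := by
  classical
  obtain ⟨a, b, c, hab, hbc, hac⟩ := aux_exists_triangle G hconn hch hnb
  have hBv : ∀ w : V, w ∈ ({v0, v1, v2} : Set V) → _root_.IsBipartite (G.induce {u | u ≠ w}) := by
    intro w hw; rw [← hB] at hw; exact hw
  have hmem : ∀ w : V, _root_.IsBipartite (G.induce {u | u ≠ w}) →
      ∀ x y z : V, G.Adj x y → G.Adj y z → G.Adj x z → w = x ∨ w = y ∨ w = z := by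
    intro w hbip x y z hxy hyz hxz
    by_contra hcon
    push_neg at hcon
    obtain ⟨hx, hy, hz⟩ := hcon
    exact aux_no_tri hbip (Ne.symm hx) (Ne.symm hy) (Ne.symm hz) hxy hyz hxz
  have key : ∀ x y z : V, G.Adj x y → G.Adj y z → G.Adj x z →
      ({x, y, z} : Finset V) = {v0, v1, v2} := by
    intro x y z hxy hyz hxz
    have m0 := hmem v0 (hBv v0 (by simp)) x y z hxy hyz hxz
    have m1 := hmem v1 (hBv v1 (by simp)) x y z hxy hyz hxz
    have m2 := hmem v2 (hBv v2 (by simp)) x y z hxy hyz hxz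
    have hsub : ({v0, v1, v2} : Finset V) ⊆ {x, y, z} := by
      intro w hw
      simp only [Finset.mem_insert, Finset.mem_singleton] at hw ⊢
      rcases hw with rfl | rfl | rfl <;> tauto
    have hcard1 : ({v0, v1, v2} : Finset V).card = 3 := by
      rw [Finset.card_insert_of_notMem (by simp [h01, h02]),
        Finset.card_insert_of_notMem (by simp [h12]), Finset.card_singleton]
    have hcard2 : ({x, y, z} : Finset V).card ≤ 3 := by
      have c1 := Finset.card_insert_le x ({y, z} : Finset V)
      have c2 := Finset.card_insert_le y ({z} : Finset V)
      have c3 : ({z} : Finset V).card = 1 := Finset.card_singleton z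
      omega
    exact (Finset.eq_of_subset_of_card_le hsub (by omega)).symm
  constructor
  · rw [← key a b c hab hbc hac]
    exact is3Clique_triple_iff.2 ⟨hab, hac, hbc⟩
  · intro t ht
    obtain ⟨x, y, z, hxy, hxz, hyz, rfl⟩ := is3Clique_iff.1 ht
    exact key x y z hxy hyz hxz
end

section
/- If G is a chordal non-bipartite graph with exactly one triangle, then G - v is a forest for every vertex v of that triangle. -/
open SimpleGraph

open SimpleGraph

namespace SimpleGraph.Walk

variable {V : Type*} {G : SimpleGraph V}

/-- Take the first `n` darts of a walk. -/
def wtake {u v : V} : (p : G.Walk u v) → (n : ℕ) → G.Walk u (p.getVert n)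
  | p, 0 => (nil : G.Walk u u).copy rfl (p.getVert_zero).symm
  | .nil, _+1 => nil
  | .cons h q, n+1 => cons h (wtake q n)

@[simp] lemma wtake_zero {u v : V} (p : G.Walk u v) :
    p.wtake 0 = (nil : G.Walk u u).copy rfl (p.getVert_zero).symm := by
  cases p <;> rfl

lemma wtake_length {u v : V} (p : G.Walk u v) (n : ℕ) :
    (p.wtake n).length = min n p.length := by
  induction p generalizing n with
  | nil => cases n <;> simp [wtake]
  | cons h q ih =>
    cases n with
    | zero => simp [wtake]
    | succ n => simp [wtake, ih, Nat.succ_min_succ]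

lemma wtake_getVert {u v : V} (p : G.Walk u v) (n i : ℕ) (hi : i ≤ n) :
    (p.wtake n).getVert i = p.getVert i := by
  induction p generalizing n i with
  | nil => cases n <;> simp [wtake]
  | cons h q ih =>
    cases n with
    | zero => interval_cases i; simp [wtake]
    | succ n =>
      cases i with
      | zero => simp [wtake]
      | succ i => simpa [wtake] using ih n i (by omega)

lemma wtake_support_subset {u v : V} (p : G.Walk u v) (n : ℕ) :
    (p.wtake n).support ⊆ p.support := by
  induction p generalizing n with
  | nil => cases n <;> simp [wtake]
  | cons h q ih =>
    cases n with
    | zero => simp [wtake, support_cons]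
    | succ n =>
      intro x hx
      simp only [wtake, support_cons, List.mem_cons] at hx ⊢
      rcases List.mem_cons.mp hx with h1 | h1
      · exact Or.inl h1
      · exact Or.inr (ih n h1)

lemma IsPath.wtake {u v : V} {p : G.Walk u v} (hp : p.IsPath) (n : ℕ) :
    (p.wtake n).IsPath := by
  induction p generalizing n with
  | nil => cases n <;> simp [Walk.wtake]
  | cons h q ih =>
    cases n with
    | zero => simp [Walk.wtake]
    | succ n =>
      rw [cons_isPath_iff] at hp
      rw [Walk.wtake]
      exact (cons_isPath_iff h (q.wtake n)).mpr ⟨ih hp.1 n, fun hc => hp.2 (wtake_support_subset q n hc)⟩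

lemma IsPath.getVert_inj {u v : V} {p : G.Walk u v} (hp : p.IsPath) {i j : ℕ}
    (hi : i ≤ p.length) (hj : j ≤ p.length) (h : p.getVert i = p.getVert j) : i = j := by
  induction p generalizing i j with
  | nil => simp at hi hj; omega
  | cons hadj q ih =>
    rw [cons_isPath_iff] at hp
    cases i with
    | zero =>
      cases j with
      | zero => rfl
      | succ j =>
        exfalso
        refine hp.2 (mem_support_iff_exists_getVert.mpr ⟨j, ?_, by simpa using hj⟩)
        simpa using h.symm
    | succ i =>
      cases j with
      | zero =>
        exfalso
        refine hp.2 (mem_support_iff_exists_getVert.mpr ⟨i, ?_, by simpa using hi⟩)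
        simpa using h
      | succ j =>
        have := ih hp.1 (by simpa using hi) (by simpa using hj) (by simpa using h)
        omega

lemma IsPath.not_loop {u : V} {p : G.Walk u u} (hp : p.IsPath) : p = Walk.nil := by
  have := SimpleGraph.Path.loop_eq (⟨p, hp⟩ : G.Path u u)
  simpa [SimpleGraph.Path.nil] using congrArg Subtype.val this

lemma IsPath.edge_ends_not_mem {x y : V} {p : G.Walk y x} (hp : p.IsPath)
    (h2 : 2 ≤ p.length) : s(x, y) ∉ p.edges := by
  cases p with
  | nil => simp
  | cons hadj q =>
    rename_i b
    rw [cons_isPath_iff] at hp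
    simp only [edges_cons, List.mem_cons]
    rintro (he | he)
    · rw [Sym2.eq_iff] at he
      rcases he with ⟨h1, -⟩ | ⟨h1, -⟩
      · exact hp.2 (h1 ▸ q.end_mem_support)
      · subst h1
        rw [hp.1.not_loop] at h2
        simp at h2
    · exact hp.2 (snd_mem_support_of_mem_edges q he)

end SimpleGraph.Walk
open SimpleGraph Walk

section Key

variable {V : Type*}

private lemma fin_sub_val_one {n : ℕ} (hn : 1 ≤ n) {i j : Fin (n+1)}
    (h : i.val = j.val + 1 ∨ (i.val = 0 ∧ j.val = n)) : (i - j).val = 1 := by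
  have hi := i.isLt
  have hj := j.isLt
  rw [Fin.sub_def]
  simp only
  rcases h with h | ⟨h1, h2⟩
  · have : n + 1 - j.val + i.val = 1 + (n+1) := by omega
    rw [this, Nat.add_mod_right, Nat.mod_eq_of_lt (by omega)]
  · have : n + 1 - j.val + i.val = 1 := by omega
    rw [this, Nat.mod_eq_of_lt (by omega)]

private lemma fin_sub_val_one' {n : ℕ} {i j : Fin (n+1)}
    (h : (i - j).val = 1) : i.val = j.val + 1 ∨ (i.val = 0 ∧ j.val = n) := by
  have hi := i.isLt
  have hj := j.isLt
  rw [Fin.sub_def] at h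
  simp only at h
  rcases Nat.lt_or_ge (n + 1 - j.val + i.val) (n+1) with hlt | hge
  · rw [Nat.mod_eq_of_lt hlt] at h
    omega
  · rw [Nat.mod_eq_sub_mod hge, Nat.mod_eq_of_lt (by omega)] at h
    omega

lemma key_triangle (G : SimpleGraph V)
    (hch : ∀ n : ℕ, 4 ≤ n → IsEmpty (cycleGraph n ↪g G))
    (hna : ¬ G.IsAcyclic) : ∃ a b c : V, G.Adj a b ∧ G.Adj a c ∧ G.Adj b c := by
  classical
  set P : ℕ → Prop := fun n =>
    ∃ (x y : V) (p : G.Walk y x), G.Adj x y ∧ p.IsPath ∧ p.length = n ∧ 2 ≤ n with hPdef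
  have hP : ∃ n, P n := by
    rw [IsAcyclic] at hna
    push_neg at hna
    obtain ⟨a, w, hw⟩ := hna
    have h3 := hw.three_le_length
    cases w with
    | nil => simp at h3
    | cons h q =>
      rw [cons_isCycle_iff] at hw
      exact ⟨q.length, a, _, q, h, hw.1, rfl, by simpa using Nat.le_of_succ_le_succ h3⟩
  obtain ⟨n, hn, hmin⟩ : ∃ n, P n ∧ ∀ m, m < n → ¬ P m :=
    ⟨Nat.find hP, Nat.find_spec hP, fun m hm => Nat.find_min hP hm⟩
  obtain ⟨x, y, p, hxy, hp, hlen, h2⟩ := hn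
  set c : G.Walk x x := Walk.cons hxy p with hcdef
  have hclen : c.length = n + 1 := by simp [hcdef, hlen]
  have hxend : p.getVert n = x := by rw [← hlen]; exact p.getVert_length
  -- no chords
  have hnochord : ∀ a b : ℕ, a < b → b ≤ n →
      G.Adj (c.getVert a) (c.getVert b) → b = a + 1 ∨ (a = 0 ∧ b = n) := by
    intro a b hab hbn hadj
    by_contra hcon
    push_neg at hcon
    obtain ⟨hne, hc2⟩ := hcon
    have hgb : c.getVert b = p.getVert (b - 1) := getVert_cons p hxy (by omega)
    rcases Nat.eq_zero_or_pos a with rfl | ha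
    · -- chord from x to p.getVert (b-1)
      have hbn' : b ≤ n - 1 := by
        rcases Nat.lt_or_ge b n with h | h
        · omega
        · exact absurd (by omega) (hc2 rfl)
      have hb2 : 2 ≤ b := by omega
      have hend : (p.drop (b-1)).getVert (n - (b-1)) = x := by
        rw [drop_getVert]
        rw [show (b-1) + (n - (b-1)) = n by omega, hxend]
      refine hmin (n - b + 1) (by omega) ⟨x, p.getVert (b-1), ?_, ?_, ?_, ?_, by omega⟩
      · exact ((p.drop (b-1)).wtake (n - (b-1))).copy rfl hend
      · have h0 : c.getVert 0 = x := by simp [hcdef]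
        rw [h0, hgb] at hadj
        exact hadj
      · simpa using (hp.drop (b-1)).wtake (n - (b-1))
      · rw [length_copy, wtake_length, drop_length, hlen]
        omega
    · -- chord from p.getVert (a-1) to p.getVert (b-1)
      have hga : c.getVert a = p.getVert (a - 1) := getVert_cons p hxy (by omega)
      have hend : (p.drop (a-1)).getVert (b - a) = p.getVert (b - 1) := by
        rw [drop_getVert, show (a-1) + (b - a) = b - 1 by omega]
      refine hmin (b - a) (by omega) ⟨p.getVert (b-1), p.getVert (a-1), ?_, ?_, ?_, ?_, by omega⟩
      · exact ((p.drop (a-1)).wtake (b - a)).copy rfl hend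
      · rw [hga, hgb] at hadj
        exact hadj.symm
      · simpa using (hp.drop (a-1)).wtake (b - a)
      · rw [length_copy, wtake_length, drop_length, hlen]
        omega
  rcases eq_or_lt_of_le h2 with h2' | h3
  · -- n = 2 : triangle x, y, p.getVert 1
    refine ⟨x, y, p.getVert 1, hxy, ?_, ?_⟩
    · have := p.adj_getVert_succ (i := 1) (by omega)
      rw [show (1:ℕ)+1 = 2 from rfl, h2', hxend] at this
      exact this.symm
    · have := p.adj_getVert_succ (i := 0) (by omega)
      rwa [p.getVert_zero] at this
  · -- n ≥ 3 : build an embedding of cycleGraph (n+1)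
    exfalso
    have hgetinj : ∀ i j : ℕ, i ≤ n → j ≤ n → c.getVert i = c.getVert j → i = j := by
      intro i j hi hj h
      rcases Nat.eq_zero_or_pos i with rfl | hi0 <;>
        rcases Nat.eq_zero_or_pos j with rfl | hj0
      · rfl
      · exfalso
        rw [c.getVert_zero, getVert_cons p hxy (by omega)] at h
        have := hp.getVert_inj (i := n) (j := j - 1) (by omega) (by omega) (hxend.trans h)
        omega
      · exfalso
        rw [c.getVert_zero, getVert_cons p hxy (by omega)] at h
        have := hp.getVert_inj (i := i - 1) (j := n) (by omega) (by omega) (h.trans hxend.symm)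
        omega
      · rw [getVert_cons p hxy (by omega), getVert_cons p hxy (by omega)] at h
        have := hp.getVert_inj (i := i - 1) (j := j - 1) (by omega) (by omega) h
        omega
    set f : Fin (n+1) → V := fun i => c.getVert i.val with hfdef
    have finj : Function.Injective f := by
      intro i j h
      exact Fin.ext (hgetinj i.val j.val (by omega) (by omega) h)
    have hwrap : c.getVert (n+1) = x := by rw [← hclen]; exact c.getVert_length
    have hadjsucc : ∀ i j : Fin (n+1), i.val = j.val + 1 ∨ (i.val = 0 ∧ j.val = n) →
        G.Adj (f i) (f j) := by
      intro i j h
      rcases h with h | ⟨h1, h2''⟩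
      · have := c.adj_getVert_succ (i := j.val) (by omega)
        simp only [hfdef, h]
        exact this.symm
      · have := c.adj_getVert_succ (i := n) (by omega)
        rw [hwrap] at this
        simp only [hfdef, h1, h2'', c.getVert_zero]
        exact this.symm
    refine (hch (n+1) (by omega)).false ⟨⟨f, finj⟩, ?_⟩
    intro i j
    simp only [Function.Embedding.coeFn_mk]
    constructor
    · -- G adjacency implies cycle adjacency
      intro hadj
      rw [cycleGraph_adj']
      rcases lt_trichotomy i.val j.val with h | h | h
      · rcases hnochord i.val j.val h (by omega) hadj with h' | h'
        · exact Or.inr (fin_sub_val_one (by omega) (Or.inl h'))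
        · exact Or.inl (fin_sub_val_one (by omega) (Or.inr ⟨h'.1, h'.2⟩))
      · exact absurd (Fin.ext h ▸ hadj) (G.loopless.irrefl _)
      · rcases hnochord j.val i.val h (by omega) hadj.symm with h' | h'
        · exact Or.inl (fin_sub_val_one (by omega) (Or.inl h'))
        · exact Or.inr (fin_sub_val_one (by omega) (Or.inr ⟨h'.1, h'.2⟩))
    · -- cycle adjacency implies G adjacency
      intro hadj
      rw [cycleGraph_adj'] at hadj
      rcases hadj with h | h
      · exact (hadjsucc i j (fin_sub_val_one' h)).symm.symm
      · exact (hadjsucc j i (fin_sub_val_one' h)).symm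

end Key

/-- if a chordal non-bipartite graph has exactly one triangle, then
deleting any vertex of that triangle leaves a forest. -/
theorem stmt11 {V : Type*} (G : SimpleGraph V) (hch : IsChordal G)
    (hnb : ¬ _root_.IsBipartite G) (huniq : ∃! t : Finset V, G.IsNClique 3 t) :
    ∀ t : Finset V, G.IsNClique 3 t → ∀ v ∈ t,
      (G.induce {u | u ≠ v}).IsAcyclic := by
  classical
  intro t ht v hv
  by_contra hna
  have hch' : ∀ n : ℕ, 4 ≤ n → IsEmpty (cycleGraph n ↪g (G.induce {u | u ≠ v})) := by
    intro n hn
    constructor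
    intro e
    exact (hch n hn).false ((Embedding.induce _).comp e)
  obtain ⟨a, b, c, hab, hac, hbc⟩ := key_triangle _ hch' hna
  have hT : G.IsNClique 3 {(a : V), (b : V), (c : V)} :=
    is3Clique_triple_iff.mpr ⟨hab, hac, hbc⟩
  obtain ⟨t₀, -, hu⟩ := huniq
  have h1 := hu _ hT
  have h2 := hu _ ht
  rw [h2, ← h1] at hv
  simp only [Finset.mem_insert, Finset.mem_singleton] at hv
  rcases hv with h | h | h
  · exact a.2 h.symm
  · exact b.2 h.symm
  · exact c.2 h.symm
end

section
/- Let G be a chordal graph, and suppose G contains an induced path v_0 v_1 v_2 v_3 (so v_0 v_2, v_0 v_3, v_1 v_3 are non-edges) such that v_2 and v_3 lie on no triangle of G, and G - v_1 contains a triangle A with v_0 in A. Then G contains an induced copy of F_1 = K_3 + K_2 (disjoint union of a triangle and an edge). -/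
open SimpleGraph

section Aux
variable {V : Type*} {G : SimpleGraph V}

lemma embed4 (hch : IsChordal G) (a b c d : V)
    (hab : G.Adj a b) (hbc : G.Adj b c) (hcd : G.Adj c d) (hda : G.Adj d a)
    (nac : ¬ G.Adj a c) (nbd : ¬ G.Adj b d)
    (hac : a ≠ c) (hbd : b ≠ d) : False := by
  have := hch 4 le_rfl
  refine this.elim ⟨⟨![a,b,c,d], ?_⟩, ?_⟩
  · intro i j
    fin_cases i <;> fin_cases j <;>
      simp_all [hab.ne, hbc.ne, hcd.ne, hda.ne, hab.ne', hbc.ne', hcd.ne', hda.ne',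
        hac, hbd, hac.symm, hbd.symm]
  · have nca : ¬ G.Adj c a := fun h => nac h.symm
    have ndb : ¬ G.Adj d b := fun h => nbd h.symm
    intro i j
    fin_cases i <;> fin_cases j <;>
      simp_all [cycleGraph_adj, hab, hbc, hcd, hda, hab.symm, hbc.symm, hcd.symm, hda.symm,
        G.irrefl, Fin.ext_iff, DFunLike.coe] <;> decide

lemma embed5 (hch : IsChordal G) (a b c d e : V)
    (hab : G.Adj a b) (hbc : G.Adj b c) (hcd : G.Adj c d) (hde : G.Adj d e) (hea : G.Adj e a)
    (nac : ¬ G.Adj a c) (nbd : ¬ G.Adj b d) (nce : ¬ G.Adj c e)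
    (nad : ¬ G.Adj a d) (nbe : ¬ G.Adj b e)
    (hac : a ≠ c) (hbd : b ≠ d) (hce : c ≠ e) (had : a ≠ d) (hbe : b ≠ e) : False := by
  have := hch 5 (by norm_num)
  refine this.elim ⟨⟨![a,b,c,d,e], ?_⟩, ?_⟩
  · intro i j
    fin_cases i <;> fin_cases j <;>
      simp_all [hab.ne, hbc.ne, hcd.ne, hde.ne, hea.ne, hab.ne', hbc.ne', hcd.ne', hde.ne',
        hea.ne', hac, hbd, hce, had, hbe, hac.symm, hbd.symm, hce.symm, had.symm, hbe.symm]
  · have nca : ¬ G.Adj c a := fun h => nac h.symm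
    have ndb : ¬ G.Adj d b := fun h => nbd h.symm
    have nec : ¬ G.Adj e c := fun h => nce h.symm
    have nda : ¬ G.Adj d a := fun h => nad h.symm
    have neb : ¬ G.Adj e b := fun h => nbe h.symm
    intro i j
    fin_cases i <;> fin_cases j <;>
      simp_all [cycleGraph_adj, hab, hbc, hcd, hde, hea, hab.symm, hbc.symm, hcd.symm,
        hde.symm, hea.symm, G.irrefl, Fin.ext_iff, DFunLike.coe] <;> decide

end Aux

set_option maxHeartbeats 1000000 in
/-- key step in Case 3 of the main theorem. -/
theorem stmt13 {V : Type*} (G : SimpleGraph V) (hch : IsChordal G)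
    (v0 v1 v2 v3 : V)
    (p01 : G.Adj v0 v1) (p12 : G.Adj v1 v2) (p23 : G.Adj v2 v3)
    (n02 : ¬ G.Adj v0 v2) (n03 : ¬ G.Adj v0 v3) (n13 : ¬ G.Adj v1 v3)
    (htri : ∀ t : Finset V, G.IsNClique 3 t → v2 ∉ t ∧ v3 ∉ t)
    (hA : ∃ a b : V, a ≠ v1 ∧ b ≠ v1 ∧ G.Adj v0 a ∧ G.Adj v0 b ∧ G.Adj a b) :
    ContainsInd F1 G := by
  obtain ⟨a, b, hav1, hbv1, h0a, h0b, hab⟩ := hA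
  -- basic distinctness
  have hv1v3 : v1 ≠ v3 := fun h => n03 (h ▸ p01)
  have hv0v2 : v0 ≠ v2 := fun h => n03 (h ▸ p23)
  have hv0v3 : v0 ≠ v3 := fun h => n02 (h.symm ▸ p23.symm)
  have hav2 : a ≠ v2 := fun h => n02 (h ▸ h0a)
  have hav3 : a ≠ v3 := fun h => n03 (h ▸ h0a)
  have hbv2 : b ≠ v2 := fun h => n02 (h ▸ h0b)
  have hbv3 : b ≠ v3 := fun h => n03 (h ▸ h0b)
  -- triangle exclusion helper
  classical
  have tri2 : ∀ x y : V, G.Adj x y → G.Adj x v2 → G.Adj y v2 → False := by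
    intro x y hxy hx2 hy2
    exact (htri {x, y, v2} (is3Clique_triple_iff.2 ⟨hxy, hx2, hy2⟩)).1
      (by simp)
  -- no edges from a, b to v2
  have key2 : ∀ x : V, x ≠ v1 → G.Adj v0 x → ¬ G.Adj x v2 := by
    intro x hxv1 h0x hx2
    by_cases hx1 : G.Adj x v1
    · exact tri2 x v1 hx1 hx2 p12
    · exact embed4 hch v0 x v2 v1 h0x hx2 p12.symm p01.symm n02 hx1 hv0v2 hxv1
  have nav2 : ¬ G.Adj a v2 := key2 a hav1 h0a
  have nbv2 : ¬ G.Adj b v2 := key2 b hbv1 h0b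
  -- no edges from a, b to v3
  have key3 : ∀ x : V, x ≠ v1 → G.Adj v0 x → ¬ G.Adj x v2 → ¬ G.Adj x v3 := by
    intro x hxv1 h0x hx2 hx3
    have hxv2 : x ≠ v2 := fun h => n02 (h ▸ h0x)
    by_cases hx1 : G.Adj x v1
    · exact embed4 hch x v1 v2 v3 hx1 p12 p23 hx3.symm hx2 n13 hxv2 hv1v3
    · exact embed5 hch v0 v1 v2 v3 x p01 p12 p23 hx3.symm h0x.symm n02 n13
        (fun h => hx2 h.symm) n03 (fun h => hx1 h.symm) hv0v2 hv1v3 hxv2.symm hv0v3 hxv1.symm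
  have nav3 : ¬ G.Adj a v3 := key3 a hav1 h0a nav2
  have nbv3 : ¬ G.Adj b v3 := key3 b hbv1 h0b nbv2
  -- assemble the induced F1 on {v0, a, b, v2, v3}
  have nca : ¬ G.Adj v2 a := fun h => nav2 h.symm
  have ncb : ¬ G.Adj v2 b := fun h => nbv2 h.symm
  have nda : ¬ G.Adj v3 a := fun h => nav3 h.symm
  have ndb : ¬ G.Adj v3 b := fun h => nbv3 h.symm
  have n20 : ¬ G.Adj v2 v0 := fun h => n02 h.symm
  have n30 : ¬ G.Adj v3 v0 := fun h => n03 h.symm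
  refine ⟨⟨![v0, a, b, v2, v3], ?_⟩, ?_⟩
  · intro i j
    fin_cases i <;> fin_cases j <;>
      simp_all [h0a.ne, h0b.ne, hab.ne, p23.ne, h0a.ne', h0b.ne', hab.ne', p23.ne',
        hv0v2, hv0v3, hav2, hav3, hbv2, hbv3, hv0v2.symm, hv0v3.symm, hav2.symm,
        hav3.symm, hbv2.symm, hbv3.symm]
  · have hF : ∀ i j : Fin 5, F1.Adj i j ↔ i ≠ j ∧
        ((i, j) ∈ [((0:Fin 5),(1:Fin 5)),(0,2),(1,2),(3,4)] ∨
         (j, i) ∈ [((0:Fin 5),(1:Fin 5)),(0,2),(1,2),(3,4)]) :=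
      by intro i j; rw [show F1 = fromRel _ from rfl, fromRel_adj]
    intro i j
    fin_cases i <;> fin_cases j <;> rw [hF] <;>
      first
        | exact iff_of_false (G.irrefl) (by decide)
        | exact iff_of_true h0a (by decide)
        | exact iff_of_true h0a.symm (by decide)
        | exact iff_of_true h0b (by decide)
        | exact iff_of_true h0b.symm (by decide)
        | exact iff_of_true hab (by decide)
        | exact iff_of_true hab.symm (by decide)
        | exact iff_of_true p23 (by decide)
        | exact iff_of_true p23.symm (by decide)
        | exact iff_of_false n02 (by decide)
        | exact iff_of_false n03 (by decide)
        | exact iff_of_false n20 (by decide)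
        | exact iff_of_false n30 (by decide)
        | exact iff_of_false nav2 (by decide)
        | exact iff_of_false nav3 (by decide)
        | exact iff_of_false nbv2 (by decide)
        | exact iff_of_false nbv3 (by decide)
        | exact iff_of_false nca (by decide)
        | exact iff_of_false ncb (by decide)
        | exact iff_of_false nda (by decide)
        | exact iff_of_false ndb (by decide)
end

section
/- Let G be a connected chordal graph with a vertex v_0 lying in every triangle of G, such that every vertex is at distance at most 2 from v_0. Let L_1 and L_2 be the sets of vertices at distance 1 and 2 from v_0, respectively. Then: (a) L_2 is an independent set; (b) every vertex of L_2 has degree exactly 1 in G; (c) the induced subgraph G[L_1] is a forest. -/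
open SimpleGraph

namespace ChordalAux
open SimpleGraph Walk

variable {V : Type*} {G : SimpleGraph V} {u v : V}

lemma getVert_drop' (p : G.Walk u v) : ∀ (i k : ℕ), (p.drop i).getVert k = p.getVert (i + k) := by
  induction p with
  | nil =>
    intro i k
    cases i <;>
      simp [Walk.drop, Walk.getVert_of_length_le, Walk.length_nil, Nat.zero_le]
  | cons h q ih =>
    intro i k
    cases i with
    | zero => simp [Walk.drop, Walk.getVert_copy]
    | succ i =>
      show ((q.drop i).copy rfl rfl).getVert k = _
      rw [Walk.getVert_copy, ih i k, Nat.succ_add, Walk.getVert_cons_succ]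

lemma length_drop' (p : G.Walk u v) : ∀ (i : ℕ), (p.drop i).length = p.length - i := by
  induction p with
  | nil => intro i; cases i <;> simp [Walk.drop]
  | cons h q ih =>
    intro i
    cases i with
    | zero => simp [Walk.drop]
    | succ i =>
      show ((q.drop i).copy rfl rfl).length = _
      rw [Walk.length_copy, ih i, Walk.length_cons, Nat.succ_sub_succ]

/-- take the first `k` darts of a walk -/
def takeIdx : {u v : V} → (p : G.Walk u v) → (k : ℕ) → G.Walk u (p.getVert k)
  | _, _, .nil, _ => Walk.nil
  | _, _, .cons _ _, 0 => Walk.nil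
  | _, _, .cons h q, k+1 => Walk.cons h (takeIdx q k)

lemma getVert_takeIdx : ∀ {u v : V} (p : G.Walk u v) (k m : ℕ),
    (takeIdx p k).getVert m = p.getVert (min m k)
  | _, _, .nil, k, m => by
      show (Walk.nil).getVert m = Walk.nil.getVert _
      rw [Walk.getVert_of_length_le _ (by simp), Walk.getVert_of_length_le _ (by simp)]
  | _, _, .cons h q, 0, m => by
      show (Walk.nil).getVert m = _
      rw [Walk.getVert_of_length_le _ (by simp), Nat.min_zero, Walk.getVert_zero]
  | _, _, .cons h q, k+1, 0 => by
      show (Walk.cons h (takeIdx q k)).getVert 0 = _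
      rw [Walk.getVert_zero, Nat.zero_min, Walk.getVert_zero]
  | _, _, .cons h q, k+1, m+1 => by
      show (takeIdx q k).getVert m = _
      rw [getVert_takeIdx q k m, Nat.succ_min_succ, Walk.getVert_cons_succ]

lemma length_takeIdx : ∀ {u v : V} (p : G.Walk u v) (k : ℕ),
    (takeIdx p k).length = min k p.length
  | _, _, .nil, k => by
      show (Walk.nil : G.Walk _ _).length = _
      simp
  | _, _, .cons h q, 0 => by
      show (Walk.nil : G.Walk _ _).length = _
      simp
  | _, _, .cons h q, k+1 => by
      show (Walk.cons h (takeIdx q k)).length = _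
      rw [Walk.length_cons, length_takeIdx q k, Walk.length_cons, Nat.succ_min_succ]

lemma support_eq_map_range (p : G.Walk u v) :
    p.support = (List.range (p.length + 1)).map p.getVert := by
  induction p with
  | nil => rfl
  | cons h q ih =>
    rw [Walk.support_cons, ih, Walk.length_cons]
    have h2 : (Walk.cons h q).getVert ∘ Nat.succ = q.getVert := funext fun j => rfl
    rw [List.range_succ_eq_map (n := q.length + 1), List.map_cons, List.map_map, h2,
      Walk.getVert_zero]

lemma mem_edges_iff_exists (p : G.Walk u v) {e : Sym2 V} (he : e ∈ p.edges) :
    ∃ m, m < p.length ∧ e = s(p.getVert m, p.getVert (m+1)) := by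
  induction p with
  | nil => simp at he
  | cons h q ih =>
    rw [Walk.edges_cons, List.mem_cons] at he
    rcases he with he | he
    · exact ⟨0, by simp, by simpa [Walk.getVert_cons_succ] using he⟩
    · obtain ⟨m, hm, hme⟩ := ih he
      exact ⟨m + 1, by simpa using hm, by simpa [Walk.getVert_cons_succ] using hme⟩

lemma IsCycle.getVert_injOn' {p : G.Walk u u} (hp : p.IsCycle) :
    ∀ i j, i < p.length → j < p.length → p.getVert i = p.getVert j → i = j := by
  have hnodup : p.support.tail.Nodup := hp.2
  rw [support_eq_map_range] at hnodup
  rw [List.range_succ_eq_map, List.map_cons, List.map_map, List.tail_cons] at hnodup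
  have hinj : ∀ a ∈ List.range p.length, ∀ b ∈ List.range p.length,
      p.getVert (a+1) = p.getVert (b+1) → a = b := by
    intro a ha b hb hab
    exact List.inj_on_of_nodup_map hnodup ha hb (by simpa using hab)
  have key : ∀ i j, 0 < i → i < p.length → 0 < j → j < p.length →
      p.getVert i = p.getVert j → i = j := by
    intro i j hi hi' hj hj' hij
    have := hinj (i-1) (by simp; omega) (j-1) (by simp; omega)
      (by rw [Nat.sub_add_cancel hi, Nat.sub_add_cancel hj]; exact hij)
    omega
  intro i j hi hj hij
  rcases Nat.eq_zero_or_pos i with hi0 | hi0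
  · rcases Nat.eq_zero_or_pos j with hj0 | hj0
    · omega
    · subst hi0
      rw [Walk.getVert_zero] at hij
      have hlen : p.getVert p.length = u := Walk.getVert_length p
      have h3 := hp.three_le_length
      have := hinj (j-1) (by simp; omega) (p.length - 1) (by simp; omega)
        (by rw [Nat.sub_add_cancel hj0, Nat.sub_add_cancel (by omega)]
            rw [← hij, hlen])
      omega
  · rcases Nat.eq_zero_or_pos j with hj0 | hj0
    · subst hj0
      rw [Walk.getVert_zero] at hij
      have hlen : p.getVert p.length = u := Walk.getVert_length p
      have h3 := hp.three_le_length
      have := hinj (i-1) (by simp; omega) (p.length - 1) (by simp; omega)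
        (by rw [Nat.sub_add_cancel hi0, Nat.sub_add_cancel (by omega)]
            rw [hij, hlen])
      omega
    · exact key i j hi0 hi hj0 hj hij


lemma triangle_of_cycle_aux (hch : IsChordal G) :
    ∀ n : ℕ, ∀ u : V, ∀ p : G.Walk u u, p.length ≤ n → p.IsCycle →
      ∃ a b c : V, a ∈ p.support ∧ b ∈ p.support ∧ c ∈ p.support ∧
        G.Adj a b ∧ G.Adj b c ∧ G.Adj a c := by
  intro n
  induction n with
  | zero => intro u p hl hp; have := hp.three_le_length; omega
  | succ n ih =>
    intro u p hl hp
    have h3 : 3 ≤ p.length := hp.three_le_length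
    have hmem : ∀ k, k ≤ p.length → p.getVert k ∈ p.support := fun k hk =>
      Walk.mem_support_iff_exists_getVert.mpr ⟨k, rfl, hk⟩
    have hinj := IsCycle.getVert_injOn' hp
    rcases eq_or_lt_of_le h3 with h3' | h4
    · -- length 3 : the cycle itself is a triangle
      have h20 : G.Adj (p.getVert 0) (p.getVert 2) := by
        have h := p.adj_getVert_succ (i := 2) (by omega)
        have h30 : p.getVert (2 + 1) = p.getVert 0 := by
          rw [Walk.getVert_zero]
          calc p.getVert (2 + 1) = p.getVert p.length := by rw [← h3']
            _ = u := Walk.getVert_length p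
        rw [h30] at h
        exact h.symm
      exact ⟨p.getVert 0, p.getVert 1, p.getVert 2, hmem 0 (by omega), hmem 1 (by omega),
        hmem 2 (by omega), p.adj_getVert_succ (by omega), p.adj_getVert_succ (by omega), h20⟩
    · by_cases hcl : ∀ i j : ℕ, i + 2 ≤ j → j < p.length → ¬(i = 0 ∧ j = p.length - 1) →
          ¬ G.Adj (p.getVert i) (p.getVert j)
      · -- chordless case : p is an induced cycle, contradicting chordality
        exfalso
        have hgl : p.getVert p.length = u := Walk.getVert_length p
        have subval : ∀ i j : Fin p.length, i.val < j.val →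
            (j - i).val = j.val - i.val ∧ (i - j).val = p.length - j.val + i.val := by
          intro i j h
          have hiL := i.isLt
          have hjL := j.isLt
          constructor
          · show ((p.length - i.val) + j.val) % p.length = _
            have he : (p.length - i.val) + j.val = p.length + (j.val - i.val) := by omega
            rw [he, Nat.add_mod_left]
            exact Nat.mod_eq_of_lt (by omega)
          · show ((p.length - j.val) + i.val) % p.length = _
            rw [Nat.mod_eq_of_lt (by omega)]
        have main : ∀ i j : Fin p.length, i.val < j.val →
            (G.Adj (p.getVert i.val) (p.getVert j.val) ↔ (cycleGraph p.length).Adj i j) := by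
          intro i j hlt
          have hiL := i.isLt
          have hjL := j.isLt
          rw [SimpleGraph.cycleGraph_adj', (subval i j hlt).1, (subval i j hlt).2]
          constructor
          · intro hA
            by_contra hcon
            push_neg at hcon
            exact hcl i.val j.val (by omega) j.isLt (by omega) hA
          · rintro (h1 | h1)
            · -- i = 0, j = length - 1 : wrap-around edge
              have hi0 : (i : ℕ) = 0 := by omega
              have hj1 : (j : ℕ) = p.length - 1 := by omega
              have h := p.adj_getVert_succ (i := p.length - 1) (by omega)
              have hx : p.getVert (p.length - 1 + 1) = p.getVert 0 := by
                rw [Walk.getVert_zero]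
                calc p.getVert (p.length - 1 + 1) = p.getVert p.length := by congr 1; omega
                  
                  _ = u := Walk.getVert_length p
              rw [hx] at h
              rw [hi0, hj1]
              exact h.symm
            · have h := p.adj_getVert_succ (i := i.val) (by omega)
              rwa [show i.val + 1 = j.val by omega] at h
        have emb : cycleGraph p.length ↪g G := by
          refine ⟨⟨fun i => p.getVert i.val, fun i j hij => Fin.ext
            (hinj i.val j.val i.isLt j.isLt hij)⟩, ?_⟩
          intro i j
          show G.Adj (p.getVert i.val) (p.getVert j.val) ↔ (cycleGraph p.length).Adj i j
          rcases lt_trichotomy i.val j.val with hlt | heq | hgt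
          · exact main i j hlt
          · have : i = j := Fin.ext heq
            subst this
            constructor
            · intro h; exact absurd h (SimpleGraph.irrefl G)
            · intro h; exact absurd h (SimpleGraph.irrefl (cycleGraph p.length))
          · rw [SimpleGraph.adj_comm]
            exact (main j i hgt).trans ⟨fun h => h.symm, fun h => h.symm⟩
        exact (hch p.length (by omega)).false emb
      · -- there is a chord : split into a shorter cycle
        push_neg at hcl
        obtain ⟨i, j, hij2, hjN, hnend, hadj⟩ := hcl
        have hend : (p.drop i).getVert (j - i) = p.getVert j := by
          rw [getVert_drop']
          congr 1
          omega
        set s : G.Walk (p.getVert i) (p.getVert j) := (takeIdx (p.drop i) (j - i)).copy rfl hend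
          with hs
        have hsget : ∀ m, m ≤ j - i → s.getVert m = p.getVert (i + m) := by
          intro m hm
          rw [hs, Walk.getVert_copy, getVert_takeIdx, getVert_drop', min_eq_left hm]
        have hslen : s.length = j - i := by
          rw [hs, Walk.length_copy, length_takeIdx, length_drop']
          exact min_eq_left (by omega)
        have hsubsup : ∀ w ∈ s.support, w ∈ p.support := by
          intro w hw
          rw [Walk.mem_support_iff_exists_getVert] at hw ⊢
          obtain ⟨k, hk, hk'⟩ := hw
          rw [hslen] at hk'
          rw [hsget k hk'] at hk
          exact ⟨i + k, hk, by omega⟩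
        have hspath : s.IsPath := by
          rw [Walk.isPath_def, support_eq_map_range s]
          apply List.Nodup.map_on ?_ List.nodup_range
          intro a ha b hb hab
          rw [List.mem_range, hslen] at ha hb
          rw [hsget a (by omega), hsget b (by omega)] at hab
          have := hinj (i+a) (i+b) (by omega) (by omega) hab
          omega
        have hcyc' : (Walk.cons hadj.symm s).IsCycle := by
          rw [Walk.cons_isCycle_iff]
          refine ⟨hspath, fun hmem2 => ?_⟩
          obtain ⟨m, hm, hme⟩ := mem_edges_iff_exists s hmem2
          rw [hslen] at hm
          rw [hsget m (by omega), hsget (m+1) (by omega)] at hme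
          rcases Sym2.eq_iff.mp hme with ⟨h1, h2⟩ | ⟨h1, h2⟩
          · have e1 := hinj j (i+m) (by omega) (by omega) h1
            have e2 := hinj i (i+m+1) (by omega) (by omega) h2
            omega
          · have e1 := hinj j (i+(m+1)) (by omega) (by omega) h1
            have e2 := hinj i (i+m) (by omega) (by omega) h2
            omega
        have hne : i ≠ 0 ∨ j ≠ p.length - 1 := by tauto
        have hlen' : (Walk.cons hadj.symm s).length ≤ n := by
          rw [Walk.length_cons, hslen]
          omega
        obtain ⟨a, b, c, ha, hb, hc, hab, hbc, hac⟩ :=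
          ih (p.getVert j) (Walk.cons hadj.symm s) hlen' hcyc'
        have hsup' : ∀ w, w ∈ (Walk.cons hadj.symm s).support → w ∈ p.support := by
          intro w hw
          rw [Walk.support_cons, List.mem_cons] at hw
          rcases hw with hw | hw
          · subst hw; exact hmem j (by omega)
          · exact hsubsup _ hw
        exact ⟨a, b, c, hsup' a ha, hsup' b hb, hsup' c hc, hab, hbc, hac⟩

end ChordalAux

/-- structure of a connected chordal graph with a vertex `v0` in every
triangle and eccentricity at most 2. -/
theorem stmt14 {V : Type*} (G : SimpleGraph V) (hconn : G.Connected)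
    (hch : IsChordal G) (v0 : V)
    (hv0 : ∀ t : Finset V, G.IsNClique 3 t → v0 ∈ t)
    (hecc : ∀ u : V, G.dist v0 u ≤ 2) :
    (∀ a ∈ {u : V | G.dist v0 u = 2}, ∀ b ∈ {u : V | G.dist v0 u = 2}, ¬ G.Adj a b) ∧
    (∀ a : V, G.dist v0 a = 2 → (G.neighborSet a).ncard = 1) ∧
    (G.induce {u : V | G.dist v0 u = 1}).IsAcyclic := by
  classical
  have htri : ∀ a b c : V, G.Adj a b → G.Adj b c → G.Adj a c →
      v0 = a ∨ v0 = b ∨ v0 = c := by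
    intro a b c hab hbc hac
    have h3 : G.IsNClique 3 {a, b, c} := SimpleGraph.is3Clique_triple_iff.mpr ⟨hab, hac, hbc⟩
    simpa using hv0 _ h3
  have hT : ∀ a b c : V, G.Adj a b → G.Adj b c → G.Adj a c →
      v0 ≠ a → v0 ≠ b → v0 ≠ c → False := by
    intro a b c hab hbc hac h1 h2 h3
    rcases htri a b c hab hbc hac with h | h | h
    exacts [h1 h, h2 h, h3 h]
  have htriangle : ∀ (w : V) (p : G.Walk w w), p.IsCycle →
      ∃ a b c, a ∈ p.support ∧ b ∈ p.support ∧ c ∈ p.support ∧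
        G.Adj a b ∧ G.Adj b c ∧ G.Adj a c :=
    fun w p hp => ChordalAux.triangle_of_cycle_aux hch p.length w p le_rfl hp
  have hnbr : ∀ a : V, G.dist v0 a = 2 → ∃ x, G.Adj v0 x ∧ G.Adj x a := by
    intro a ha
    obtain ⟨p, hp⟩ := hconn.exists_walk_length_eq_dist v0 a
    rw [ha] at hp
    refine ⟨p.getVert 1, ?_, ?_⟩
    · have h := p.adj_getVert_succ (i := 0) (by omega)
      rwa [Walk.getVert_zero] at h
    · have h := p.adj_getVert_succ (i := 1) (by omega)
      have h2 : p.getVert (1 + 1) = a := by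
        calc p.getVert (1 + 1) = p.getVert p.length := by rw [hp]
          _ = a := Walk.getVert_length p
      rwa [h2] at h
  have hnadj : ∀ w : V, G.dist v0 w = 2 → ¬ G.Adj v0 w := by
    intro w hw h
    have := SimpleGraph.dist_eq_one_iff_adj.mpr h
    omega
  have hnev0 : ∀ w : V, G.dist v0 w = 2 → v0 ≠ w := by
    intro w hw h
    have := hconn.dist_eq_zero_iff.mpr h
    omega
  have partA : ∀ a ∈ {u : V | G.dist v0 u = 2}, ∀ b ∈ {u : V | G.dist v0 u = 2},
      ¬ G.Adj a b := by
    intro a ha b hb hadj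
    simp only [Set.mem_setOf_eq] at ha hb
    obtain ⟨x, hvx, hxa⟩ := hnbr a ha
    obtain ⟨y, hvy, hyb⟩ := hnbr b hb
    have hxb : ¬ G.Adj x b := fun h => hT x a b hxa hadj h hvx.ne (hnev0 _ ha) (hnev0 _ hb)
    have hya : ¬ G.Adj y a := fun h =>
      hT y b a hyb hadj.symm h hvy.ne (hnev0 _ hb) (hnev0 _ ha)
    have hxy : x ≠ y := fun h => hxb (h ▸ hyb)
    have hax : a ≠ x := fun h => hnadj _ ha (h ▸ hvx)
    have hay : a ≠ y := fun h => hnadj _ ha (h ▸ hvy)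
    have hbx : b ≠ x := fun h => hnadj _ hb (h ▸ hvx)
    have hby : b ≠ y := fun h => hnadj _ hb (h ▸ hvy)
    by_cases hxyadj : G.Adj x y
    · set c4 : G.Walk x x :=
        Walk.cons hxa (Walk.cons hadj (Walk.cons hyb.symm (Walk.cons hxyadj.symm Walk.nil)))
        with hc4
      have hcyc : c4.IsCycle := by
        rw [hc4, Walk.cons_isCycle_iff]
        constructor
        · rw [Walk.isPath_def]
          simp [hadj.ne, hadj.ne', hax, hax.symm, hay, hay.symm, hbx, hbx.symm,
            hby, hby.symm, hxy, hxy.symm, hxa.ne, hxa.ne', hyb.ne, hyb.ne']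
        · simp [Sym2.eq_iff, hadj.ne, hadj.ne', hax, hax.symm, hay, hay.symm, hbx, hbx.symm,
            hby, hby.symm, hxy, hxy.symm, hxa.ne, hxa.ne', hyb.ne, hyb.ne',
            hvx.ne, hvx.ne', hvy.ne, hvy.ne', hnev0 _ ha, (hnev0 _ ha).symm,
            hnev0 _ hb, (hnev0 _ hb).symm]
      obtain ⟨a', b', c', ha', hb', hc', hab', hbc', hac'⟩ := htriangle x c4 hcyc
      have hnotin : ∀ w ∈ c4.support, v0 ≠ w := by
        intro w hw
        rw [hc4] at hw
        simp only [Walk.support_cons, Walk.support_nil, List.mem_cons,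
          List.not_mem_nil, or_false] at hw
        rcases hw with rfl | rfl | rfl | rfl | rfl
        exacts [hvx.ne, hnev0 _ ha, hnev0 _ hb, hvy.ne, hvx.ne]
      exact hT a' b' c' hab' hbc' hac' (hnotin a' ha') (hnotin b' hb') (hnotin c' hc')
    · set c5 : G.Walk v0 v0 :=
        Walk.cons hvx (Walk.cons hxa (Walk.cons hadj (Walk.cons hyb.symm
          (Walk.cons hvy.symm Walk.nil)))) with hc5
      have hcyc : c5.IsCycle := by
        rw [hc5, Walk.cons_isCycle_iff]
        constructor
        · rw [Walk.isPath_def]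
          simp [hadj.ne, hadj.ne', hax, hax.symm, hay, hay.symm, hbx, hbx.symm,
            hby, hby.symm, hxy, hxy.symm, hxa.ne, hxa.ne', hyb.ne, hyb.ne',
            hvx.ne, hvx.ne', hvy.ne, hvy.ne', hnev0 _ ha, (hnev0 _ ha).symm,
            hnev0 _ hb, (hnev0 _ hb).symm]
        · simp [Sym2.eq_iff, hadj.ne, hadj.ne', hax, hax.symm, hay, hay.symm, hbx, hbx.symm,
            hby, hby.symm, hxy, hxy.symm, hxa.ne, hxa.ne', hyb.ne, hyb.ne',
            hvx.ne, hvx.ne', hvy.ne, hvy.ne', hnev0 _ ha, (hnev0 _ ha).symm,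
            hnev0 _ hb, (hnev0 _ hb).symm]
      obtain ⟨a', b', c', ha', hb', hc', hab', hbc', hac'⟩ := htriangle v0 c5 hcyc
      have hmem5 : ∀ w ∈ c5.support, w = v0 ∨ w = x ∨ w = a ∨ w = b ∨ w = y := by
        intro w hw
        rw [hc5] at hw
        simp only [Walk.support_cons, Walk.support_nil, List.mem_cons,
          List.not_mem_nil, or_false] at hw
        tauto
      have hkey : ∀ w1 w2 : V, w1 ∈ c5.support → w2 ∈ c5.support →
          G.Adj v0 w1 → G.Adj v0 w2 → G.Adj w1 w2 → False := by
        intro w1 w2 h1 h2 hv1 hv2 h12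
        have e1 : w1 = x ∨ w1 = y := by
          rcases hmem5 w1 h1 with rfl | rfl | rfl | rfl | rfl
          · exact absurd rfl hv1.ne
          · exact Or.inl rfl
          · exact absurd hv1 (hnadj _ ha)
          · exact absurd hv1 (hnadj _ hb)
          · exact Or.inr rfl
        have e2 : w2 = x ∨ w2 = y := by
          rcases hmem5 w2 h2 with rfl | rfl | rfl | rfl | rfl
          · exact absurd rfl hv2.ne
          · exact Or.inl rfl
          · exact absurd hv2 (hnadj _ ha)
          · exact absurd hv2 (hnadj _ hb)
          · exact Or.inr rfl
        rcases e1 with rfl | rfl <;> rcases e2 with rfl | rfl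
        · exact h12.ne rfl
        · exact hxyadj h12
        · exact hxyadj h12.symm
        · exact h12.ne rfl
      rcases htri a' b' c' hab' hbc' hac' with rfl | rfl | rfl
      · exact hkey b' c' hb' hc' hab' hac' hbc'
      · exact hkey a' c' ha' hc' hab'.symm hbc' hac'
      · exact hkey a' b' ha' hb' hac'.symm hbc'.symm hab'
  have partB : ∀ a : V, G.dist v0 a = 2 → (G.neighborSet a).ncard = 1 := by
    intro a ha
    obtain ⟨x, hvx, hxa⟩ := hnbr a ha
    have hset : G.neighborSet a = {x} := by
      ext w
      simp only [SimpleGraph.mem_neighborSet, Set.mem_singleton_iff]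
      constructor
      · intro haw
        by_contra hwx
        have hw0 : v0 ≠ w := by
          rintro rfl
          exact hnadj _ ha haw.symm
        have hw2 : G.dist v0 w ≠ 2 := fun h => partA a ha w h haw
        have hw1 : G.dist v0 w = 1 := by
          have hd := hecc w
          have h0 : G.dist v0 w ≠ 0 := fun h => hw0 (hconn.dist_eq_zero_iff.mp h)
          omega
        have hvw : G.Adj v0 w := SimpleGraph.dist_eq_one_iff_adj.mp hw1
        by_cases hxw : G.Adj x w
        · exact hT x w a hxw haw.symm hxa hvx.ne hvw.ne (hnev0 _ ha)
        · set c4 : G.Walk v0 v0 :=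
            Walk.cons hvx (Walk.cons hxa (Walk.cons haw (Walk.cons hvw.symm Walk.nil)))
            with hc4
          have hax : a ≠ x := fun h => hnadj _ ha (h ▸ hvx)
          have hxwne : x ≠ w := fun h => hwx h.symm
          have hcyc : c4.IsCycle := by
            rw [hc4, Walk.cons_isCycle_iff]
            constructor
            · rw [Walk.isPath_def]
              simp [hxa.ne, hxa.ne', hax, hax.symm, haw.ne, haw.ne', hxwne, hxwne.symm,
                hvx.ne, hvx.ne', hw0, hw0.symm, hnev0 _ ha, (hnev0 _ ha).symm]
            · simp [Sym2.eq_iff, hxa.ne, hxa.ne', hax, hax.symm, haw.ne, haw.ne',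
                hxwne, hxwne.symm, hvx.ne, hvx.ne', hw0, hw0.symm, hnev0 _ ha,
                (hnev0 _ ha).symm]
          obtain ⟨a', b', c', ha', hb', hc', hab', hbc', hac'⟩ := htriangle v0 c4 hcyc
          have hmem4 : ∀ z ∈ c4.support, z = v0 ∨ z = x ∨ z = a ∨ z = w := by
            intro z hz
            rw [hc4] at hz
            simp only [Walk.support_cons, Walk.support_nil, List.mem_cons,
              List.not_mem_nil, or_false] at hz
            tauto
          have hkey : ∀ w1 w2 : V, w1 ∈ c4.support → w2 ∈ c4.support →
              G.Adj v0 w1 → G.Adj v0 w2 → G.Adj w1 w2 → False := by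
            intro w1 w2 h1 h2 hv1 hv2 h12
            have e1 : w1 = x ∨ w1 = w := by
              rcases hmem4 w1 h1 with rfl | rfl | rfl | rfl
              · exact absurd rfl hv1.ne
              · exact Or.inl rfl
              · exact absurd hv1 (hnadj _ ha)
              · exact Or.inr rfl
            have e2 : w2 = x ∨ w2 = w := by
              rcases hmem4 w2 h2 with rfl | rfl | rfl | rfl
              · exact absurd rfl hv2.ne
              · exact Or.inl rfl
              · exact absurd hv2 (hnadj _ ha)
              · exact Or.inr rfl
            rcases e1 with rfl | rfl <;> rcases e2 with rfl | rfl
            · exact h12.ne rfl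
            · exact hxw h12
            · exact hxw h12.symm
            · exact h12.ne rfl
          rcases htri a' b' c' hab' hbc' hac' with rfl | rfl | rfl
          · exact hkey b' c' hb' hc' hab' hac' hbc'
          · exact hkey a' c' ha' hc' hab'.symm hbc' hac'
          · exact hkey a' b' ha' hb' hac'.symm hbc'.symm hab'
      · rintro rfl
        exact hxa.symm
    rw [hset, Set.ncard_singleton]
  have partC : (G.induce {u : V | G.dist v0 u = 1}).IsAcyclic := by
    intro w p hp
    have hc : (p.map (SimpleGraph.Embedding.induce (G := G) {u : V | G.dist v0 u = 1}).toHom).IsCycle :=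
      (SimpleGraph.Walk.map_isCycle_iff_of_injective
        (SimpleGraph.Embedding.induce (G := G) {u : V | G.dist v0 u = 1}).injective).mpr hp
    obtain ⟨a, b, c, ha, hb, hcs, hab, hbc, hac⟩ := htriangle _ _ hc
    have hL1 : ∀ z, z ∈ (p.map
        (SimpleGraph.Embedding.induce (G := G) {u : V | G.dist v0 u = 1}).toHom).support →
        G.dist v0 z = 1 := by
      intro z hz
      rw [Walk.support_map] at hz
      obtain ⟨z', _, rfl⟩ := List.mem_map.mp hz
      exact z'.2
    have hself : G.dist v0 v0 = 0 := SimpleGraph.dist_self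
    rcases htri a b c hab hbc hac with rfl | rfl | rfl
    · have := hL1 _ ha; omega
    · have := hL1 _ hb; omega
    · have := hL1 _ hcs; omega
  exact ⟨partA, partB, partC⟩
end

section
/- Let G be a connected chordal graph in which a vertex v_0 lies in every triangle, every vertex is within distance 2 of v_0, G[L_1] is a forest (L_i = vertices at distance i from v_0), every vertex of L_2 is a leaf, and: no two adjacent vertices of L_1 both have neighbours in L_2, and within each tree component of G[L_1] all vertices having neighbours in L_2 lie at even distance from one another. Then G admits an M_1-partition, obtained by colouring v_0 with 3, all of L_2 with 1, and properly 2-colouring each component of G[L_1] so that vertices with L_2-neighbours receive colour 2. -/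
open SimpleGraph

lemma path_length_eq_dist {α : Type*} [DecidableEq α] {H : SimpleGraph α} (hac : H.IsAcyclic)
    {u v : α} (p : H.Walk u v) (hp : p.IsPath) : p.length = H.dist u v := by
  obtain ⟨w, hw⟩ := p.reachable.exists_walk_length_eq_dist
  have h1 : (⟨p, hp⟩ : H.Path u v) = w.toPath := hac.path_unique _ _
  have h2 : (w.toPath : H.Walk u v).length ≤ w.length := Walk.length_bypass_le w
  have h3 : p.length ≤ H.dist u v := by
    have := congr_arg (fun q : H.Path u v => (q : H.Walk u v).length) h1
    simp only at this
    omega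
  exact le_antisymm h3 (H.dist_le p)

lemma dist_flip {α : Type*} [DecidableEq α] {H : SimpleGraph α} (hac : H.IsAcyclic)
    {a b c : α} (hab : H.Adj a b) (hr : H.Reachable a c) :
    H.dist b c = H.dist a c + 1 ∨ H.dist a c = H.dist b c + 1 := by
  obtain ⟨w, hw⟩ := hr.exists_walk_length_eq_dist
  set p : H.Walk a c := (w.toPath : H.Walk a c) with hpdef
  have hp : p.IsPath := w.toPath.2
  have hplen : p.length = H.dist a c := path_length_eq_dist hac p hp
  by_cases hb : b ∈ p.support
  · right
    have htake : (p.takeUntil b hb).IsPath := hp.takeUntil hb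
    have hdrop : (p.dropUntil b hb).IsPath := hp.dropUntil hb
    have hsum := congr_arg Walk.length (p.take_spec hb)
    rw [Walk.length_append] at hsum
    have h1 : (p.takeUntil b hb).length = H.dist a b :=
      path_length_eq_dist hac _ htake
    have h2 : (p.dropUntil b hb).length = H.dist b c :=
      path_length_eq_dist hac _ hdrop
    have h3 : H.dist a b = 1 := (SimpleGraph.dist_eq_one_iff_adj (G:=H)).mpr hab
    omega
  · left
    have hq : (Walk.cons hab.symm p).IsPath := hp.cons hb
    have := path_length_eq_dist hac _ hq
    rw [Walk.length_cons] at this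
    omega

lemma walk_parity {α : Type*} [DecidableEq α] {H : SimpleGraph α} (hac : H.IsAcyclic)
    {u v : α} (p : H.Walk u v) (c : α) (hr : H.Reachable v c) :
    H.dist u c % 2 = (p.length + H.dist v c) % 2 := by
  induction p with
  | nil => simp
  | @cons x y _ h q ih =>
    have hyc : H.Reachable y c := q.reachable.trans hr
    have := ih hr
    rcases dist_flip hac h.symm hyc with h' | h' <;>
      rw [Walk.length_cons] <;> omega

lemma tri_parity {α : Type*} [DecidableEq α] {H : SimpleGraph α} (hac : H.IsAcyclic)
    {c c' u : α} (h1 : H.Reachable c c') (h2 : H.Reachable c' u) :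
    H.dist c u % 2 = (H.dist c c' + H.dist c' u) % 2 := by
  obtain ⟨p⟩ := h1
  have hA := walk_parity hac p u h2
  have hB := walk_parity hac p c' (Reachable.refl c')
  rw [SimpleGraph.dist_self] at hB
  omega


/-- Case 3 of the sufficiency proof of the main theorem. -/
theorem stmt15 {V : Type*} (G : SimpleGraph V) (hconn : G.Connected)
    (hch : IsChordal G) (v0 : V)
    (hv0 : ∀ t : Finset V, G.IsNClique 3 t → v0 ∈ t)
    (hecc : ∀ u : V, G.dist v0 u ≤ 2)
    (hforest : (G.induce {u : V | G.dist v0 u = 1}).IsAcyclic)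
    (hleaf : ∀ a : V, G.dist v0 a = 2 → (G.neighborSet a).ncard = 1)
    (hadj : ∀ a b : V, G.dist v0 a = 1 → G.dist v0 b = 1 → G.Adj a b →
      (∃ x : V, G.dist v0 x = 2 ∧ G.Adj a x) →
      ¬ ∃ y : V, G.dist v0 y = 2 ∧ G.Adj b y)
    (heven : ∀ a b : ↥{u : V | G.dist v0 u = 1},
      (∃ x : V, G.dist v0 x = 2 ∧ G.Adj a.1 x) →
      (∃ y : V, G.dist v0 y = 2 ∧ G.Adj b.1 y) →
      (G.induce {u : V | G.dist v0 u = 1}).Reachable a b →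
      Even ((G.induce {u : V | G.dist v0 u = 1}).dist a b)) :
    ∃ V1 V2 : Set V, IsM1Partition G V1 V2 {v0} ∧
      {u : V | G.dist v0 u = 2} ⊆ V1 ∧ V2 ⊆ {u : V | G.dist v0 u = 1} := by
  classical
  set S : Set V := {u : V | G.dist v0 u = 1} with hS
  set H : SimpleGraph ↥S := G.induce S with hHdef
  have memS : ∀ u : V, u ∈ S ↔ G.dist v0 u = 1 := fun u => Iff.rfl
  set hasL2 : ↥S → Prop := fun a => ∃ x : V, G.dist v0 x = 2 ∧ G.Adj a.1 x with hhasL2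
  set anch : ↥S → ↥S := fun u =>
    if h : ∃ a : ↥S, hasL2 a ∧ H.Reachable a u then h.choose
    else Quot.out (H.connectedComponentMk u) with hanch
  have reach_anch : ∀ u : ↥S, H.Reachable (anch u) u := by
    intro u
    by_cases h : ∃ a : ↥S, hasL2 a ∧ H.Reachable a u
    · rw [hanch]; simp only [dif_pos h]; exact h.choose_spec.2
    · rw [hanch]; simp only [dif_neg h]
      exact ConnectedComponent.eq.mp (Quot.out_eq (H.connectedComponentMk u))
  have anch_l2 : ∀ u : ↥S, (∃ a : ↥S, hasL2 a ∧ H.Reachable a u) → hasL2 (anch u) := by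
    intro u h
    rw [hanch]; simp only [dif_pos h]; exact h.choose_spec.1
  -- anchored vertices get even colour
  have anchored_even : ∀ u : ↥S, hasL2 u → Even (H.dist (anch u) u) := by
    intro u hu
    have hcond : ∃ a : ↥S, hasL2 a ∧ H.Reachable a u := ⟨u, hu, Reachable.refl u⟩
    exact heven (anch u) u (anch_l2 u hcond) hu (reach_anch u)
  have hadjH : ∀ (a b : ↥S), G.Adj a.1 b.1 → H.Adj a b := by
    intro a b hab
    rw [hHdef]
    exact hab
  -- key parity lemma
  have key : ∀ u w : ↥S, H.Adj u w →
      H.dist (anch u) u % 2 ≠ H.dist (anch w) w % 2 := by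
    intro u w huw
    have hr : H.Reachable u w := huw.reachable
    by_cases h : ∃ a : ↥S, hasL2 a ∧ H.Reachable a u
    · have h' : ∃ a : ↥S, hasL2 a ∧ H.Reachable a w :=
        ⟨h.choose, h.choose_spec.1, h.choose_spec.2.trans hr⟩
      have hAl2 : hasL2 (anch u) := anch_l2 u h
      have hBl2 : hasL2 (anch w) := anch_l2 w h'
      have hAu : H.Reachable (anch u) u := reach_anch u
      have hBw : H.Reachable (anch w) w := reach_anch w
      have hAB : H.Reachable (anch u) (anch w) := (hAu.trans hr).trans hBw.symm
      have hevAB : Even (H.dist (anch u) (anch w)) := heven _ _ hAl2 hBl2 hAB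
      have htri : H.dist (anch u) w % 2 =
          (H.dist (anch u) (anch w) + H.dist (anch w) w) % 2 :=
        tri_parity hforest hAB hBw
      have hflip := dist_flip hforest huw (hAu.symm)
      rw [SimpleGraph.dist_comm (u := w) (v := anch u),
        SimpleGraph.dist_comm (u := u) (v := anch u)] at hflip
      rw [Nat.even_iff] at hevAB
      omega
    · have h' : ¬ ∃ a : ↥S, hasL2 a ∧ H.Reachable a w := by
        rintro ⟨a, ha, har⟩
        exact h ⟨a, ha, har.trans hr.symm⟩
      have e1 : anch u = Quot.out (H.connectedComponentMk u) := by
        rw [hanch]; simp only [dif_neg h]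
      have e2 : anch w = Quot.out (H.connectedComponentMk w) := by
        rw [hanch]; simp only [dif_neg h']
      have ecc : H.connectedComponentMk u = H.connectedComponentMk w :=
        ConnectedComponent.eq.mpr hr
      have eanch : anch u = anch w := by rw [e1, e2, ecc]
      have hflip := dist_flip hforest huw ((reach_anch u).symm)
      rw [SimpleGraph.dist_comm (u := w) (v := anch u),
        SimpleGraph.dist_comm (u := u) (v := anch u)] at hflip
      rw [eanch] at hflip ⊢
      omega
  -- neighbours of L2 vertices
  have nb : ∀ a : V, G.dist v0 a = 2 → ∃ y : V, G.dist v0 y = 1 ∧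
      ∀ b : V, G.Adj a b → b = y := by
    intro a ha
    obtain ⟨w, hw⟩ := (hconn v0 a).exists_walk_length_eq_dist
    rw [ha] at hw
    cases w with
    | nil => simp at hw
    | @cons _ y _ h q =>
      rw [Walk.length_cons] at hw
      have hq1 : q.length = 1 := by omega
      have hya : G.Adj y a := by
        cases q with
        | nil => simp at hq1
        | @cons _ z _ h2 q2 =>
          rw [Walk.length_cons] at hq1
          have : z = a := Walk.eq_of_length_eq_zero (p := q2) (by omega)
          rwa [this] at h2
      have hy1 : G.dist v0 y = 1 := SimpleGraph.dist_eq_one_iff_adj.mpr h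
      obtain ⟨z, hz⟩ := Set.ncard_eq_one.mp (hleaf a ha)
      have hyz : y = z := by
        have : y ∈ G.neighborSet a := hya.symm
        rw [hz] at this; exact this
      refine ⟨y, hy1, fun b hb => ?_⟩
      have : b ∈ G.neighborSet a := hb
      rw [hz] at this
      rw [this, hyz]
  refine ⟨{u : V | G.dist v0 u = 2 ∨ ∃ hu : u ∈ S,
      ¬ Even (H.dist (anch ⟨u, hu⟩) ⟨u, hu⟩)},
    {u : V | ∃ hu : u ∈ S, Even (H.dist (anch ⟨u, hu⟩) ⟨u, hu⟩)},
    ?_, ?_, ?_⟩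
  · refine ⟨?_, ?_, ?_, ?_, ?_, ?_, ?_, ?_⟩
    · -- cover
      intro u
      have := hecc u
      interval_cases h : G.dist v0 u
      · right; right
        exact (hconn.dist_eq_zero_iff.mp h).symm
      · have hu : u ∈ S := h
        by_cases he : Even (H.dist (anch ⟨u, hu⟩) ⟨u, hu⟩)
        · right; left; exact ⟨hu, he⟩
        · left; exact Or.inr ⟨hu, he⟩
      · left; exact Or.inl h
    · -- Disjoint V1 V2
      rw [Set.disjoint_left]
      rintro u (h1 | ⟨hu, hodd⟩) ⟨hu', hev⟩
      · rw [memS] at hu'; omega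
      · exact hodd hev
    · -- Disjoint V1 {v0}
      rw [Set.disjoint_left]
      rintro u (h1 | ⟨hu, _⟩) hv
      · rw [Set.mem_singleton_iff] at hv; subst hv
        rw [SimpleGraph.dist_self] at h1; omega
      · rw [Set.mem_singleton_iff] at hv; subst hv
        rw [memS, SimpleGraph.dist_self] at hu; omega
    · -- Disjoint V2 {v0}
      rw [Set.disjoint_left]
      rintro u ⟨hu, _⟩ hv
      rw [Set.mem_singleton_iff] at hv; subst hv
      rw [memS, SimpleGraph.dist_self] at hu; omega
    · -- V1 independent
      rintro a (ha | ⟨ha, haodd⟩) b (hb | ⟨hb, hbodd⟩) hab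
      · obtain ⟨y, hy1, hy2⟩ := nb a ha
        have := hy2 b hab
        subst this; omega
      · -- a in L2, b in L1 odd : contradiction since b is anchored-even
        have hbl2 : hasL2 ⟨b, hb⟩ := ⟨a, ha, hab.symm⟩
        exact hbodd (anchored_even ⟨b, hb⟩ hbl2)
      · have hal2 : hasL2 ⟨a, ha⟩ := ⟨b, hb, hab⟩
        exact haodd (anchored_even ⟨a, ha⟩ hal2)
      · have hH : H.Adj ⟨a, ha⟩ ⟨b, hb⟩ := hadjH _ _ hab
        have := key _ _ hH
        rw [Nat.even_iff] at haodd hbodd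
        omega
    · -- V2 independent
      rintro a ⟨ha, haev⟩ b ⟨hb, hbev⟩ hab
      have hH : H.Adj ⟨a, ha⟩ ⟨b, hb⟩ := hadjH _ _ hab
      have := key _ _ hH
      rw [Nat.even_iff] at haev hbev
      omega
    · -- {v0} independent
      rintro a ha b hb hab
      rw [Set.mem_singleton_iff] at ha hb
      subst ha; subst hb
      exact G.irrefl hab
    · -- V2 completely adjacent to v0
      rintro a ⟨ha, _⟩ b hb
      rw [Set.mem_singleton_iff] at hb; subst hb
      rw [memS] at ha
      exact (SimpleGraph.dist_eq_one_iff_adj.mp ha).symm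
  · intro u hu
    exact Or.inl hu
  · rintro u ⟨hu, _⟩
    exact hu
end
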